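/- Every sharply orthocomplete Archimedean atomic MV-effect algebra E is a complete lattice; indeed E is isomorphic to the direct product ∏_{a ∈ A} [0, n_a a] over the set A of atoms of E, where n_a = ord(a). -/

import Mathlib

universe u v

/-- An effect algebra: a partial algebra `(E; ⊕, 0, 1)` with `0 ≠ 1`, where `⊕` is
partially defined (domain `D`), commutative and associative where defined, every
element has a unique orthosupplement (`compl`, skolemizing axiom (Eiii)), and
`1 ⊕ x` defined implies `x = 0`. -/
structure EffectAlgebra (E : Type u) where
  D : E → E → Prop
  oplus : E → E → E
  zero : E
  one : E
  zero_ne_one : zero ≠ one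
  D_comm : ∀ x y, D x y → D y x
  oplus_comm : ∀ x y, D x y → oplus x y = oplus y x
  assoc : ∀ x y z, D x y → D (oplus x y) z →
      D y z ∧ D x (oplus y z) ∧ oplus (oplus x y) z = oplus x (oplus y z)
  assoc' : ∀ x y z, D y z → D x (oplus y z) →
      D x y ∧ D (oplus x y) z ∧ oplus (oplus x y) z = oplus x (oplus y z)
  compl : E → E
  D_compl : ∀ x, D x (compl x)
  oplus_compl : ∀ x, oplus x (compl x) = one
  compl_unique : ∀ x y, D x y → oplus x y = one → y = compl x
  one_max : ∀ x, D one x → x = zero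

namespace EffectAlgebra

variable {E : Type u} (A : EffectAlgebra E)

/-- The induced order: `x ≤ y` iff `x ⊕ z = y` for some `z`. -/
def le (x y : E) : Prop := ∃ z, A.D x z ∧ A.oplus x z = y

def IsLB (S : Set E) (m : E) : Prop := ∀ x ∈ S, A.le m x
def IsUB (S : Set E) (m : E) : Prop := ∀ x ∈ S, A.le x m

/-- `m` is the infimum of `S` computed within the subposet `P`. -/
def IsInfIn (P : Set E) (S : Set E) (m : E) : Prop :=
  m ∈ P ∧ A.IsLB S m ∧ ∀ z ∈ P, A.IsLB S z → A.le z m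

/-- `m` is the supremum of `S` computed within the subposet `P`. -/
def IsSupIn (P : Set E) (S : Set E) (m : E) : Prop :=
  m ∈ P ∧ A.IsUB S m ∧ ∀ z ∈ P, A.IsUB S z → A.le m z

/-- `w` is sharp iff the meet `w ∧ w'` exists in `E` and equals `0`. -/
def Sharp (w : E) : Prop := A.IsInfIn Set.univ {w, A.compl w} A.zero

/-- The set `S(E)` of sharp elements. -/
def sharpSet : Set E := {w | A.Sharp w}

def HasMeet (x y : E) : Prop := ∃ m, A.IsInfIn Set.univ {x, y} m
def HasJoin (x y : E) : Prop := ∃ j, A.IsSupIn Set.univ {x, y} j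

/-- Every `x` has a least sharp element above it, which is the infimum of the sharp
elements above `x` both in `E` and in `S(E)`. -/
def SharplyDominating : Prop :=
  ∀ x : E, ∃ w, A.Sharp w ∧ A.le x w ∧
    A.IsInfIn Set.univ {v | A.Sharp v ∧ A.le x v} w ∧
    A.IsInfIn A.sharpSet {v | A.Sharp v ∧ A.le x v} w

/-- Sharply dominating, and `x ∧ w` exists for every `x ∈ E`, `w ∈ S(E)`. -/
def SDominating : Prop :=
  A.SharplyDominating ∧ ∀ x w : E, A.Sharp w → A.HasMeet x w

end EffectAlgebra

/-- `SumDef A l s` : the orthosum of the finite list `l` is defined and equals `s`. -/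
inductive EffectAlgebra.SumDef {E : Type u} (A : EffectAlgebra E) : List E → E → Prop
  | nil : EffectAlgebra.SumDef A [] A.zero
  | cons {x : E} {l : List E} {s : E} : EffectAlgebra.SumDef A l s → A.D x s →
      EffectAlgebra.SumDef A (x :: l) (A.oplus x s)

namespace EffectAlgebra

variable {E : Type u} (A : EffectAlgebra E)

/-- A family is orthogonal iff every finite subfamily has a defined orthosum. -/
def Orthogonal {ι : Type v} (x : ι → E) : Prop :=
  ∀ l : List ι, l.Nodup → ∃ s, A.SumDef (l.map x) s

/-- The set of finite partial orthosums of a family. -/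
def finiteSums {ι : Type v} (x : ι → E) : Set E :=
  {s | ∃ l : List ι, l.Nodup ∧ A.SumDef (l.map x) s}

/-- `v = ⊕ x` : the family is orthogonal and `v` is the supremum in `E` of all
finite partial orthosums. -/
def HasOrthoSum {ι : Type v} (x : ι → E) (v : E) : Prop :=
  A.Orthogonal x ∧ A.IsSupIn Set.univ (A.finiteSums x) v

/-- Every family dominated elementwise by an orthogonal family of sharp
elements has an orthosum. -/
def SharplyOrthocomplete : Prop :=
  ∀ (ι : Type u) (x w : ι → E), (∀ k, A.Sharp (w k)) → A.Orthogonal w →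
    (∀ k, A.le (x k) (w k)) → ∃ v, A.HasOrthoSum x v

/-- `c` is central: for every `y` the meets `y ∧ c`, `y ∧ c'` exist and
`y = (y ∧ c) ∨ (y ∧ c')`. -/
def Central (c : E) : Prop :=
  ∀ y : E, ∃ m₁ m₂, A.IsInfIn Set.univ {y, c} m₁ ∧
    A.IsInfIn Set.univ {y, A.compl c} m₂ ∧ A.IsSupIn Set.univ {m₁, m₂} y

/-- The center `C(E)`. -/
def centerSet : Set E := {c | A.Central c}

def CentrallyDominating : Prop :=
  ∀ x : E, ∃ c, A.Central c ∧ A.le x c ∧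
    A.IsInfIn Set.univ {d | A.Central d ∧ A.le x d} c ∧
    A.IsInfIn A.centerSet {d | A.Central d ∧ A.le x d} c

def CentrallyOrthocomplete : Prop :=
  ∀ (ι : Type u) (x c : ι → E), (∀ k, A.Central (c k)) → A.Orthogonal c →
    (∀ k, A.le (x k) (c k)) → ∃ v, A.HasOrthoSum x v

/-- `P` is bifull in `E`: for `S ⊆ P`, the join of `S` in `P` exists iff the join
of `S` in `E` exists, and then they coincide. -/
def Bifull (P : Set E) : Prop :=
  ∀ S ⊆ P, (∀ s, A.IsSupIn P S s → A.IsSupIn Set.univ S s) ∧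
    (∀ s, A.IsSupIn Set.univ S s → A.IsSupIn P S s)

/-- The subposet `P` is a complete lattice: every subset of `P` has a supremum
(and an infimum) computed within `P`. -/
def CompleteIn (P : Set E) : Prop :=
  ∀ S ⊆ P, (∃ s, A.IsSupIn P S s) ∧ (∃ m, A.IsInfIn P S m)

/-- `E` is a complete lattice. -/
def Complete : Prop :=
  ∀ S : Set E, (∃ s, A.IsSupIn Set.univ S s) ∧ (∃ m, A.IsInfIn Set.univ S m)

/-- The induced order of `E` is a lattice. -/
def LatticeOrdered : Prop := ∀ x y : E, A.HasMeet x y ∧ A.HasJoin x y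

/-- `x ↔ y` : `x ∨ y = x ⊕ (y ⊖ (x ∧ y))`. -/
def Compatible (x y : E) : Prop :=
  ∃ m j z, A.IsInfIn Set.univ {x, y} m ∧ A.IsSupIn Set.univ {x, y} j ∧
    A.D m z ∧ A.oplus m z = y ∧ A.D x z ∧ A.oplus x z = j

/-- An MV-effect algebra: a lattice effect algebra all of whose pairs of elements
are compatible. -/
def MV : Prop := A.LatticeOrdered ∧ ∀ x y : E, A.Compatible x y

/-- `nx = x ⊕ ⋯ ⊕ x` (`n` times) is defined. -/
def nTimesDef (n : ℕ) (x : E) : Prop := ∃ s, A.SumDef (List.replicate n x) s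

/-- `ord x < ∞` for every nonzero `x`. -/
def IsArchimedean : Prop := ∀ x : E, x ≠ A.zero → ∃ n : ℕ, ¬ A.nTimesDef n x

def Atom (a : E) : Prop := a ≠ A.zero ∧ ∀ b, A.le b a → b = A.zero ∨ b = a

def Atomic : Prop := ∀ x : E, x ≠ A.zero → ∃ a, A.Atom a ∧ A.le a x

/-- The subposet `P` (closed under `'`) is an orthomodular lattice. -/
def OrthomodularIn (P : Set E) : Prop :=
  (∀ x ∈ P, ∀ y ∈ P, (∃ m, A.IsInfIn P {x, y} m) ∧ (∃ j, A.IsSupIn P {x, y} j)) ∧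
  A.zero ∈ P ∧ A.one ∈ P ∧ (∀ x ∈ P, A.compl x ∈ P) ∧
  (∀ x ∈ P, A.IsInfIn P {x, A.compl x} A.zero ∧ A.IsSupIn P {x, A.compl x} A.one) ∧
  (∀ x ∈ P, ∀ y ∈ P, A.le x y →
    ∃ m, A.IsInfIn P {y, A.compl x} m ∧ A.IsSupIn P {x, m} y)

def DistributiveIn (P : Set E) : Prop :=
  ∀ x ∈ P, ∀ y ∈ P, ∀ z ∈ P, ∀ jyz mxy mxz m : E,
    A.IsSupIn P {y, z} jyz → A.IsInfIn P {x, y} mxy → A.IsInfIn P {x, z} mxz →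
    A.IsInfIn P {x, jyz} m → A.IsSupIn P {mxy, mxz} m

/-- The subposet `P` is a Boolean algebra (complemented distributive lattice with
bounds, complement given by `'`). -/
def BooleanIn (P : Set E) : Prop :=
  (∀ x ∈ P, ∀ y ∈ P, (∃ m, A.IsInfIn P {x, y} m) ∧ (∃ j, A.IsSupIn P {x, y} j)) ∧
  A.zero ∈ P ∧ A.one ∈ P ∧ (∀ x ∈ P, A.compl x ∈ P) ∧
  (∀ x ∈ P, A.IsInfIn P {x, A.compl x} A.zero ∧ A.IsSupIn P {x, A.compl x} A.one) ∧
  A.DistributiveIn P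

/-- A block: a maximal set of pairwise compatible elements. -/
def Block (M : Set E) : Prop :=
  (∀ x ∈ M, ∀ y ∈ M, A.Compatible x y) ∧
  ∀ N : Set E, M ⊆ N → (∀ x ∈ N, ∀ y ∈ N, A.Compatible x y) → N = M

def AtomIn (M : Set E) (a : E) : Prop :=
  a ∈ M ∧ a ≠ A.zero ∧ ∀ b ∈ M, A.le b a → b = A.zero ∨ b = a

def AtomicIn (M : Set E) : Prop :=
  ∀ x ∈ M, x ≠ A.zero → ∃ a, A.AtomIn M a ∧ A.le a x

end EffectAlgebra



/-!
Fix `tₐ = nₐ a` for every atom `a`. Every element below `tₐ` is a multiple of `a`, every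
multiple of `a` lies below `tₐ`, and the `tₐ` are sharp and pairwise disjoint. So sharp
orthocompleteness sums any family `fₐ ≤ tₐ`, and the sum `v` satisfies `v ∧ tₐ = fₐ`, because
`v ≤ f_b ⊕ (v ∧ t_b')` and `v ∧ t_b'` is disjoint from `t_b`. Conversely every `x` is the
orthosum of its components `x ∧ tₐ`: an atom `b` below the remainder could be added to `x ∧ t_b`
staying below both `x` and `t_b`. Hence `x ↦ (x ∧ tₐ)ₐ` is an order isomorphism onto
`∏ₐ [0, tₐ]`, additive by Riesz decomposition. Each `[0, tₐ]` is a finite chain, so suprema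
exist coordinatewise, and infima follow by complementation.
-/

namespace EffectAlgebra

variable {E : Type u} (A : EffectAlgebra E)

lemma compl_one : A.compl A.one = A.zero :=
  A.one_max _ (A.D_compl A.one)

lemma compl_compl (x : E) : A.compl (A.compl x) = x := by
  have h := A.D_comm _ _ (A.D_compl x)
  refine (A.compl_unique _ _ h ?_).symm
  rw [A.oplus_comm _ _ h, A.oplus_compl]

lemma D_compl_zero_and_oplus (x : E) :
    A.D (A.compl x) A.zero ∧ A.oplus (A.compl x) A.zero = A.compl x := by
  have h1 : A.D (A.oplus x (A.compl x)) A.zero := by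
    rw [A.oplus_compl, ← A.compl_one]; exact A.D_compl _
  obtain ⟨hd, hd', he⟩ := A.assoc x (A.compl x) A.zero (A.D_compl x) h1
  refine ⟨hd, A.compl_unique x _ hd' ?_⟩
  rw [← he, A.oplus_compl, ← A.compl_one, A.oplus_compl]

lemma D_zero (x : E) : A.D x A.zero := by
  simpa [compl_compl] using (A.D_compl_zero_and_oplus (A.compl x)).1

lemma zero_D (x : E) : A.D A.zero x := A.D_comm _ _ (A.D_zero x)

lemma oplus_zero (x : E) : A.oplus x A.zero = x := by
  simpa [compl_compl] using (A.D_compl_zero_and_oplus (A.compl x)).2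

lemma zero_oplus (x : E) : A.oplus A.zero x = x := by
  rw [A.oplus_comm _ _ (A.zero_D x), A.oplus_zero]

lemma le_refl (x : E) : A.le x x := ⟨A.zero, A.D_zero x, A.oplus_zero x⟩

lemma zero_le (x : E) : A.le A.zero x := ⟨x, A.zero_D x, A.zero_oplus x⟩

lemma le_one (x : E) : A.le x A.one := ⟨A.compl x, A.D_compl x, A.oplus_compl x⟩

variable {A}

lemma le_self_oplus {x y : E} (h : A.D x y) : A.le x (A.oplus x y) := ⟨y, h, rfl⟩

lemma le_oplus_self {x y : E} (h : A.D x y) : A.le y (A.oplus x y) :=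
  ⟨x, A.D_comm _ _ h, A.oplus_comm _ _ (A.D_comm _ _ h)⟩

lemma le_trans {x y z : E} (hxy : A.le x y) (hyz : A.le y z) : A.le x z := by
  obtain ⟨u, hu, rfl⟩ := hxy
  obtain ⟨v, hv, rfl⟩ := hyz
  obtain ⟨-, huv, he⟩ := A.assoc x u v hu hv
  exact ⟨A.oplus u v, huv, he.symm⟩

lemma D_iff_le_compl {x y : E} : A.D x y ↔ A.le y (A.compl x) := by
  constructor
  · intro h
    obtain ⟨h1, h2, h3⟩ := A.assoc x y _ h (A.D_compl _)
    refine ⟨_, h1, A.compl_unique x _ h2 ?_⟩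
    rw [← h3, A.oplus_compl]
  · rintro ⟨u, hu, hue⟩
    exact (A.assoc' x y u hu (hue ▸ A.D_compl x)).1

-- `u = ((x ⊕ u)' ⊕ x)'`, so `u` is determined by `x` and `x ⊕ u`.
lemma oplus_left_cancel {x u v : E} (hu : A.D x u) (hv : A.D x v)
    (h : A.oplus x u = A.oplus x v) : u = v := by
  have eq_compl : ∀ w, A.D x w →
      w = A.compl (A.oplus (A.compl (A.oplus x w)) x) := by
    intro w hw
    obtain ⟨h1, h2, h3⟩ := A.assoc x w _ hw (A.D_compl _)
    have hwd : A.oplus w (A.compl (A.oplus x w)) = A.compl x :=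
      A.compl_unique x _ h2 (by rw [← h3, A.oplus_compl])
    have hx : A.D (A.oplus w (A.compl (A.oplus x w))) x := by
      rw [hwd]; exact A.D_comm _ _ (A.D_compl x)
    obtain ⟨-, g2, g3⟩ := A.assoc w _ x h1 hx
    refine A.compl_unique w _ g2 ?_ ▸ (A.compl_compl w).symm
    rw [← g3, hwd, A.oplus_comm _ _ (A.D_comm _ _ (A.D_compl x)), A.oplus_compl]
  rw [eq_compl u hu, eq_compl v hv, h]

lemma le_of_oplus_le_oplus_left {x u v : E} (hu : A.D x u) (hv : A.D x v)
    (h : A.le (A.oplus x u) (A.oplus x v)) : A.le u v := by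
  obtain ⟨e, he, hee⟩ := h
  obtain ⟨h1, h2, h3⟩ := A.assoc x u e hu he
  exact ⟨e, h1, oplus_left_cancel h2 hv (h3 ▸ hee)⟩

lemma eq_zero_of_oplus_eq_zero {x y : E} (hd : A.D x y) (h : A.oplus x y = A.zero) :
    x = A.zero ∧ y = A.zero := by
  have hD1 : A.D (A.oplus x y) A.one := by
    rw [h, ← A.compl_compl A.one, A.compl_one]; exact A.D_compl _
  obtain ⟨h1, -, -⟩ := A.assoc x y A.one hd hD1
  have hy : y = A.zero := A.one_max y (A.D_comm _ _ h1)
  rw [hy, A.oplus_zero] at h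
  exact ⟨h, hy⟩

lemma le_antisymm {x y : E} (hxy : A.le x y) (hyx : A.le y x) : x = y := by
  obtain ⟨u, hu, rfl⟩ := hxy
  obtain ⟨v, hv, hve⟩ := hyx
  obtain ⟨g1, g2, g3⟩ := A.assoc x u v hu hv
  have huv : A.oplus u v = A.zero :=
    oplus_left_cancel g2 (A.D_zero x) (by rw [← g3, hve, A.oplus_zero])
  rw [(eq_zero_of_oplus_eq_zero g1 huv).1, A.oplus_zero]

lemma eq_zero_of_le_zero {x : E} (h : A.le x A.zero) : x = A.zero :=
  le_antisymm h (A.zero_le x)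

lemma eq_zero_of_oplus_le_self {x y : E} (hd : A.D x y) (h : A.le (A.oplus x y) x) :
    y = A.zero :=
  eq_zero_of_le_zero
    (le_of_oplus_le_oplus_left hd (A.D_zero x) (by rwa [A.oplus_zero]))

lemma compl_le_compl {x y : E} (h : A.le x y) : A.le (A.compl y) (A.compl x) :=
  D_iff_le_compl.mp (A.D_comm _ _ (D_iff_le_compl.mpr (by rwa [A.compl_compl])))

lemma le_compl_comm {x y : E} : A.le x (A.compl y) ↔ A.le y (A.compl x) :=
  ⟨fun h => D_iff_le_compl.mp (A.D_comm _ _ (D_iff_le_compl.mpr h)),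
   fun h => D_iff_le_compl.mp (A.D_comm _ _ (D_iff_le_compl.mpr h))⟩

lemma D_of_le_of_le {x y u v : E} (hx : A.le x u) (hy : A.le y v) (h : A.D u v) : A.D x y := by
  rw [D_iff_le_compl] at h ⊢
  exact le_trans hy (le_trans h (compl_le_compl hx))

lemma oplus_le_oplus_left {x u v : E} (h : A.le u v) (hv : A.D x v) :
    A.D x u ∧ A.le (A.oplus x u) (A.oplus x v) := by
  obtain ⟨w, hw, rfl⟩ := h
  obtain ⟨h1, h2, h3⟩ := A.assoc' x u w hw hv
  exact ⟨h1, ⟨w, h2, h3⟩⟩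

lemma oplus_le_oplus {x y u v : E} (hx : A.le x u) (hy : A.le y v) (h : A.D u v) :
    A.D x y ∧ A.le (A.oplus x y) (A.oplus u v) := by
  obtain ⟨hxy, hle⟩ := oplus_le_oplus_left hy (D_of_le_of_le hx (A.le_refl v) h)
  obtain ⟨hvx, hle'⟩ := oplus_le_oplus_left hx (A.D_comm _ _ h)
  rw [A.oplus_comm _ _ hvx, A.oplus_comm _ _ (A.D_comm _ _ h)] at hle'
  exact ⟨hxy, le_trans hle hle'⟩

lemma isLB_pair {x y m : E} : A.IsLB {x, y} m ↔ A.le m x ∧ A.le m y := by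
  simp [IsLB]

lemma isUB_pair {x y m : E} : A.IsUB {x, y} m ↔ A.le x m ∧ A.le y m := by
  simp [IsUB]

lemma IsInfIn.unique {S : Set E} {m m' : E} (h : A.IsInfIn Set.univ S m)
    (h' : A.IsInfIn Set.univ S m') : m = m' :=
  le_antisymm (h'.2.2 m trivial h.2.1) (h.2.2 m' trivial h'.2.1)

lemma complete_of_forall_exists_isSupIn (h : ∀ S : Set E, ∃ s, A.IsSupIn Set.univ S s) :
    A.Complete := by
  refine fun S => ⟨h S, ?_⟩
  obtain ⟨j, -, hub, hlub⟩ := h (A.compl '' S)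
  refine ⟨A.compl j, trivial, fun x hx => ?_, fun z _ hz => ?_⟩
  · simpa [compl_compl] using compl_le_compl (hub _ ⟨x, hx, rfl⟩)
  · refine le_compl_comm.mp (hlub _ trivial ?_)
    rintro _ ⟨x, hx, rfl⟩
    exact compl_le_compl (hz x hx)

namespace SumDef

lemma eq_zero_of_nil {s : E} (h : A.SumDef [] s) : s = A.zero := by
  cases h; rfl

lemma of_cons {x : E} {l : List E} {s : E} (h : A.SumDef (x :: l) s) :
    ∃ t, A.SumDef l t ∧ A.D x t ∧ s = A.oplus x t := by
  cases h with
  | cons ht hd => exact ⟨_, ht, hd, rfl⟩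

lemma unique {l : List E} {s t : E} (hs : A.SumDef l s) (ht : A.SumDef l t) : s = t := by
  induction l generalizing s t with
  | nil => rw [hs.eq_zero_of_nil, ht.eq_zero_of_nil]
  | cons x l ih =>
    obtain ⟨s', hs', -, rfl⟩ := hs.of_cons
    obtain ⟨t', ht', -, rfl⟩ := ht.of_cons
    rw [ih hs' ht']

lemma perm {l l' : List E} {s : E} (h : A.SumDef l s) (hp : l.Perm l') : A.SumDef l' s := by
  induction hp generalizing s with
  | nil => exact h
  | cons x _ ih =>
    obtain ⟨t, ht, hd, rfl⟩ := h.of_cons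
    exact cons (ih ht) hd
  | swap x y l =>
    obtain ⟨t, ht, hdy, rfl⟩ := h.of_cons
    obtain ⟨u, hu, hdx, rfl⟩ := ht.of_cons
    obtain ⟨h1, h2, h3⟩ := A.assoc' y x u hdx hdy
    rw [← h3, A.oplus_comm _ _ h1]
    rw [A.oplus_comm _ _ h1] at h2
    obtain ⟨g1, g2, g3⟩ := A.assoc x y u (A.D_comm _ _ h1) h2
    rw [g3]
    exact cons (cons hu g1) g2
  | trans _ _ ih1 ih2 => exact ih2 (ih1 h)

lemma append {l₁ l₂ : List E} {s₁ s₂ : E} (h₁ : A.SumDef l₁ s₁) (h₂ : A.SumDef l₂ s₂)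
    (hd : A.D s₁ s₂) : A.SumDef (l₁ ++ l₂) (A.oplus s₁ s₂) := by
  induction l₁ generalizing s₁ with
  | nil => rwa [h₁.eq_zero_of_nil, A.zero_oplus]
  | cons x l ih =>
    obtain ⟨t, ht, hdx, rfl⟩ := h₁.of_cons
    obtain ⟨g1, g2, g3⟩ := A.assoc x t s₂ hdx hd
    rw [g3]
    exact cons (ih ht g1) g2

lemma of_append {l₁ l₂ : List E} {s : E} (h : A.SumDef (l₁ ++ l₂) s) :
    ∃ s₁ s₂, A.SumDef l₁ s₁ ∧ A.SumDef l₂ s₂ ∧ A.D s₁ s₂ ∧ s = A.oplus s₁ s₂ := by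
  induction l₁ generalizing s with
  | nil => exact ⟨A.zero, s, nil, h, A.zero_D s, (A.zero_oplus s).symm⟩
  | cons x l ih =>
    obtain ⟨t, ht, hdx, rfl⟩ := h.of_cons
    obtain ⟨s₁, s₂, g1, g2, g3, rfl⟩ := ih ht
    obtain ⟨k1, k2, k3⟩ := A.assoc' x s₁ s₂ g3 hdx
    exact ⟨A.oplus x s₁, s₂, cons g1 k1, g2, k2, k3.symm⟩

end SumDef

lemma sumDef_singleton (x : E) : A.SumDef [x] x := by
  simpa [A.oplus_zero] using SumDef.cons (A := A) SumDef.nil (A.D_zero x)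

lemma single_mem_finiteSums {ι : Type v} (f : ι → E) (i : ι) : f i ∈ A.finiteSums f :=
  ⟨[i], List.nodup_singleton i, sumDef_singleton (f i)⟩

lemma sumDef_replicate_le {a : E} {k n : ℕ} (hkn : k ≤ n) {t s : E}
    (ht : A.SumDef (List.replicate k a) t) (hs : A.SumDef (List.replicate n a) s) :
    A.le t s := by
  rw [show n = k + (n - k) by omega, List.replicate_add] at hs
  obtain ⟨t', r, ht', -, hd, rfl⟩ := hs.of_append
  rw [ht.unique ht']
  exact le_self_oplus hd

lemma nTimesDef_of_le {a : E} {k n : ℕ} (hkn : k ≤ n) (h : A.nTimesDef n a) :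
    A.nTimesDef k a := by
  obtain ⟨s, hs⟩ := h
  rw [show n = k + (n - k) by omega, List.replicate_add] at hs
  obtain ⟨t, -, ht, -⟩ := hs.of_append
  exact ⟨t, ht⟩

def MeetZero (A : EffectAlgebra E) (x y : E) : Prop := A.IsInfIn Set.univ {x, y} A.zero

lemma meetZero_iff {x y : E} :
    A.MeetZero x y ↔ ∀ z, A.le z x → A.le z y → z = A.zero := by
  refine ⟨fun h z hx hy => eq_zero_of_le_zero (h.2.2 z trivial (isLB_pair.mpr ⟨hx, hy⟩)),
    fun h => ⟨trivial, isLB_pair.mpr ⟨A.zero_le x, A.zero_le y⟩, fun z _ hz => ?_⟩⟩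
  rw [h z (isLB_pair.mp hz).1 (isLB_pair.mp hz).2]
  exact A.le_refl _

namespace MeetZero

lemma symm {x y : E} (h : A.MeetZero x y) : A.MeetZero y x :=
  meetZero_iff.mpr fun z hy hx => meetZero_iff.mp h z hx hy

lemma mono {x y x' y' : E} (h : A.MeetZero x y) (hx : A.le x' x) (hy : A.le y' y) :
    A.MeetZero x' y' :=
  meetZero_iff.mpr fun z h1 h2 => meetZero_iff.mp h z (le_trans h1 hx) (le_trans h2 hy)

end MeetZero

lemma meetZero_zero (y : E) : A.MeetZero A.zero y :=
  meetZero_iff.mpr fun _ h _ => eq_zero_of_le_zero h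

lemma meetZero_of_atom_ne {a b : E} (ha : A.Atom a) (hb : A.Atom b) (hab : a ≠ b) :
    A.MeetZero a b := by
  refine meetZero_iff.mpr fun z h1 h2 => ?_
  rcases ha.2 z h1 with h | rfl
  · exact h
  · exact (hb.2 z h2).resolve_right hab

lemma pairwise_map_of_nodup {ι : Type v} {f : ι → E}
    (hf : Pairwise fun i j => A.MeetZero (f i) (f j)) {l : List ι} (hl : l.Nodup) :
    (l.map f).Pairwise A.MeetZero :=
  List.pairwise_map.mpr (hl.imp fun hij => hf hij)

abbrev Atoms (A : EffectAlgebra E) : Type u := {a : E // A.Atom a}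

/-- `t = nₐ a` with `nₐ = ord a`. -/
def IsOrdMultiple (A : EffectAlgebra E) (a t : E) : Prop :=
  ∃ n : ℕ, A.SumDef (List.replicate n a) t ∧ ¬ A.nTimesDef (n + 1) a

lemma exists_isOrdMultiple (hArch : A.IsArchimedean) {a : E} (ha : a ≠ A.zero) :
    ∃ t, A.IsOrdMultiple a t := by
  classical
  have h : ∃ m, ¬ A.nTimesDef m a := hArch a ha
  have hpos : Nat.find h ≠ 0 := fun h0 => by
    have := Nat.find_spec h
    rw [h0] at this
    exact this ⟨A.zero, SumDef.nil⟩
  obtain ⟨t, ht⟩ := not_not.mp (Nat.find_min h (Nat.pred_lt hpos))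
  refine ⟨t, _, ht, ?_⟩
  rw [Nat.pred_eq_sub_one, Nat.sub_add_cancel (Nat.pos_of_ne_zero hpos)]
  exact Nat.find_spec h

lemma IsOrdMultiple.le_of_sumDef_replicate {a t y : E} (ht : A.IsOrdMultiple a t) {k : ℕ}
    (hy : A.SumDef (List.replicate k a) y) : A.le y t := by
  obtain ⟨n, hn, hmax⟩ := ht
  have hkn : k ≤ n := by
    by_contra hlt
    exact hmax (nTimesDef_of_le (by omega) ⟨y, hy⟩)
  exact sumDef_replicate_le hkn hy hn

namespace MV

variable (hMV : A.MV)
include hMV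

noncomputable def inf (x y : E) : E := (hMV.1 x y).1.choose

lemma isInfIn_inf (x y : E) : A.IsInfIn Set.univ {x, y} (hMV.inf x y) :=
  (hMV.1 x y).1.choose_spec

lemma inf_le_left {x y : E} : A.le (hMV.inf x y) x := (isLB_pair.mp (hMV.isInfIn_inf x y).2.1).1

lemma inf_le_right {x y : E} : A.le (hMV.inf x y) y := (isLB_pair.mp (hMV.isInfIn_inf x y).2.1).2

lemma le_inf {x y z : E} (hx : A.le z x) (hy : A.le z y) : A.le z (hMV.inf x y) :=
  (hMV.isInfIn_inf x y).2.2 z trivial (isLB_pair.mpr ⟨hx, hy⟩)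

-- Compatibility says `x ∨ y = x ⊕ (y ⊖ (x ∧ y))`, and here `x ∧ y = 0`.
lemma D_and_isSupIn_oplus {x y : E} (h : A.MeetZero x y) :
    A.D x y ∧ A.IsSupIn Set.univ {x, y} (A.oplus x y) := by
  obtain ⟨m, j, z, hm, hj, -, hze, hdx, hxe⟩ := hMV.2 x y
  rw [hm.unique h, A.zero_oplus] at hze
  subst hze
  exact ⟨hdx, hxe ▸ hj⟩

lemma D_of_meetZero {x y : E} (h : A.MeetZero x y) : A.D x y :=
  (hMV.D_and_isSupIn_oplus h).1

lemma oplus_le_of_meetZero {x y z : E} (h : A.MeetZero x y) (hx : A.le x z) (hy : A.le y z) :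
    A.le (A.oplus x y) z :=
  (hMV.D_and_isSupIn_oplus h).2.2.2 z trivial (isUB_pair.mpr ⟨hx, hy⟩)

lemma le_of_le_oplus_of_meetZero {z u w : E} (hd : A.D u w) (h : A.le z (A.oplus u w))
    (hzu : A.MeetZero z u) : A.le z w := by
  have hle := hMV.oplus_le_of_meetZero hzu h (le_self_oplus hd)
  have hdz := hMV.D_of_meetZero hzu
  rw [A.oplus_comm _ _ hdz] at hle
  exact le_of_oplus_le_oplus_left (A.D_comm _ _ hdz) hd hle

lemma meetZero_of_sumDef {z : E} {l : List E} {s : E} (hl : ∀ y ∈ l, A.MeetZero z y)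
    (hs : A.SumDef l s) : A.MeetZero z s := by
  induction l generalizing s with
  | nil => rw [hs.eq_zero_of_nil]; exact (meetZero_zero z).symm
  | cons x t ih =>
    obtain ⟨r, hr, hd, rfl⟩ := hs.of_cons
    have hzr := ih (fun y hy => hl y (List.mem_cons_of_mem x hy)) hr
    refine meetZero_iff.mpr fun w h1 h2 => meetZero_iff.mp hzr w h1 ?_
    exact hMV.le_of_le_oplus_of_meetZero hd h2 ((hl x List.mem_cons_self).mono h1 (A.le_refl x))

lemma exists_sumDef_of_pairwise {l : List E} (hl : l.Pairwise A.MeetZero) :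
    ∃ s, A.SumDef l s := by
  induction l with
  | nil => exact ⟨A.zero, SumDef.nil⟩
  | cons x t ih =>
    obtain ⟨hx, ht⟩ := List.pairwise_cons.mp hl
    obtain ⟨s, hs⟩ := ih ht
    exact ⟨_, SumDef.cons hs (hMV.D_of_meetZero (hMV.meetZero_of_sumDef hx hs))⟩

lemma sumDef_le_of_pairwise {l : List E} (hl : l.Pairwise A.MeetZero) {s x : E}
    (hs : A.SumDef l s) (hx : ∀ y ∈ l, A.le y x) : A.le s x := by
  induction l generalizing s with
  | nil => rw [hs.eq_zero_of_nil]; exact A.zero_le x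
  | cons y t ih =>
    obtain ⟨hy, ht⟩ := List.pairwise_cons.mp hl
    obtain ⟨r, hr, -, rfl⟩ := hs.of_cons
    exact hMV.oplus_le_of_meetZero (hMV.meetZero_of_sumDef hy hr) (hx y List.mem_cons_self)
      (ih ht hr fun z hz => hx z (List.mem_cons_of_mem y hz))

lemma orthogonal_of_pairwise {ι : Type v} {f : ι → E}
    (hf : Pairwise fun i j => A.MeetZero (f i) (f j)) : A.Orthogonal f :=
  fun _ hl => hMV.exists_sumDef_of_pairwise (pairwise_map_of_nodup hf hl)

lemma isUB_finiteSums {ι : Type v} {f : ι → E}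
    (hf : Pairwise fun i j => A.MeetZero (f i) (f j)) {x : E} (hx : ∀ i, A.le (f i) x) :
    A.IsUB (A.finiteSums f) x := by
  rintro s ⟨l, hl, hs⟩
  exact hMV.sumDef_le_of_pairwise (pairwise_map_of_nodup hf hl) hs
    (List.forall_mem_map.mpr fun i _ => hx i)

lemma le_oplus_inf_of_mem_finiteSums {ι : Type v} {f : ι → E}
    (hf : Pairwise fun i j => A.MeetZero (f i) (f j)) {b : ι} {u v s : E}
    (hu : ∀ i, i ≠ b → A.le (f i) u) (hs : s ∈ A.finiteSums f) (hsv : A.le s v)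
    (hD : A.D (f b) (hMV.inf v u)) : A.le s (A.oplus (f b) (hMV.inf v u)) := by
  classical
  obtain ⟨l, hl, hs⟩ := hs
  by_cases hb : b ∈ l
  · obtain ⟨t, ht, hdt, rfl⟩ := (hs.perm ((List.perm_cons_erase hb).map f)).of_cons
    have htu : A.le t u := hMV.sumDef_le_of_pairwise (pairwise_map_of_nodup hf (hl.erase b)) ht
      (List.forall_mem_map.mpr fun i hi => hu i ((hl.mem_erase_iff.mp hi).1))
    have htv : A.le t v := le_trans (le_oplus_self hdt) hsv
    exact (oplus_le_oplus_left (hMV.le_inf htv htu) hD).2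
  · have hsu : A.le s u := hMV.sumDef_le_of_pairwise (pairwise_map_of_nodup hf hl) hs
      (List.forall_mem_map.mpr fun i hi => hu i (ne_of_mem_of_not_mem hi hb))
    exact le_trans (hMV.le_inf hsv hsu) (le_oplus_self hD)

lemma exists_oplus_eq_of_le_oplus {u x y : E} (hd : A.D x y) (h : A.le u (A.oplus x y)) :
    ∃ m w, A.D m w ∧ A.oplus m w = u ∧ A.le m x ∧ A.le w y := by
  obtain ⟨m, j, z, hm, hj, hdz, hze, hdu, hue⟩ := hMV.2 u x
  have hjle : A.le j (A.oplus x y) := hj.2.2 _ trivial (isUB_pair.mpr ⟨h, le_self_oplus hd⟩)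
  -- `x ⊕ y = (m ⊕ y) ⊕ z` and `j = u ⊕ z`, so cancelling `z` gives `u ≤ m ⊕ y`.
  rw [← hze] at hd
  obtain ⟨g1, g2, g3⟩ := A.assoc m z y hdz hd
  rw [A.oplus_comm _ _ g1] at g2 g3
  obtain ⟨k1, k2, k3⟩ := A.assoc' m y z (A.D_comm _ _ g1) g2
  rw [← hue, ← hze, g3, ← k3, A.oplus_comm _ _ hdu, A.oplus_comm _ _ k2] at hjle
  have hule := le_of_oplus_le_oplus_left (A.D_comm _ _ hdu) (A.D_comm _ _ k2) hjle
  obtain ⟨w, hdw, rfl⟩ := (isLB_pair.mp hm.2.1).1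
  exact ⟨m, w, hdw, rfl, (isLB_pair.mp hm.2.1).2, le_of_oplus_le_oplus_left hdw k1 hule⟩

lemma meetZero_of_replicate {a b : E} (ha : A.Atom a) (hb : A.Atom b) (hab : a ≠ b)
    {n m : ℕ} {s t : E} (hs : A.SumDef (List.replicate n a) s)
    (ht : A.SumDef (List.replicate m b) t) : A.MeetZero s t := by
  have hat : A.MeetZero a t := hMV.meetZero_of_sumDef (fun y hy => by
    rw [List.eq_of_mem_replicate hy]; exact meetZero_of_atom_ne ha hb hab) ht
  exact (hMV.meetZero_of_sumDef (fun y hy => by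
    rw [List.eq_of_mem_replicate hy]; exact hat.symm) hs).symm

lemma eq_of_atom_le_replicate {a b : E} (ha : A.Atom a) (hb : A.Atom b) {n : ℕ} {s : E}
    (hs : A.SumDef (List.replicate n a) s) (hbs : A.le b s) : b = a := by
  by_contra hba
  have := hMV.meetZero_of_replicate hb ha hba (n := 1) (sumDef_singleton b) hs
  exact hb.1 (meetZero_iff.mp this b (A.le_refl b) hbs)

noncomputable def toPi (ta : A.Atoms → E) (x : E) (a : A.Atoms) : {y : E // A.le y (ta a)} :=
  ⟨hMV.inf x (ta a), hMV.inf_le_right⟩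

variable (hAtomic : A.Atomic) (hSO : A.SharplyOrthocomplete) {ta : A.Atoms → E}
  (hta : ∀ a : A.Atoms, A.IsOrdMultiple a.1 (ta a))

include hta in
lemma pairwise_meetZero_of_le_ord {f : A.Atoms → E} (hf : ∀ a, A.le (f a) (ta a)) :
    Pairwise fun a b => A.MeetZero (f a) (f b) := by
  intro a b hab
  obtain ⟨n, hn, -⟩ := hta a
  obtain ⟨m, hm, -⟩ := hta b
  exact (hMV.meetZero_of_replicate a.2 b.2 (Subtype.coe_injective.ne hab) hn hm).mono
    (hf a) (hf b)

section
include hAtomic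

lemma exists_sumDef_replicate_of_le {a : E} (ha : A.Atom a) {n : ℕ} {s : E}
    (hs : A.SumDef (List.replicate n a) s) {y : E} (hy : A.le y s) :
    ∃ k, A.SumDef (List.replicate k a) y ∧ k ≤ n := by
  induction n generalizing s y with
  | zero =>
    rw [List.replicate_zero, hs.eq_zero_of_nil] at *
    exact ⟨0, eq_zero_of_le_zero hy ▸ SumDef.nil, le_rfl⟩
  | succ n ih =>
    by_cases hy0 : y = A.zero
    · exact ⟨0, hy0 ▸ SumDef.nil, Nat.zero_le _⟩
    obtain ⟨b, hb, hby⟩ := hAtomic y hy0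
    obtain rfl := hMV.eq_of_atom_le_replicate ha hb hs (le_trans hby hy)
    obtain ⟨s', hs', hda, rfl⟩ := hs.of_cons
    obtain ⟨y', hdy, rfl⟩ := hby
    obtain ⟨k, hk, hkn⟩ := ih hs' (le_of_oplus_le_oplus_left hdy hda hy)
    exact ⟨k + 1, SumDef.cons hk hdy, by omega⟩

lemma sharp_of_isOrdMultiple {a t : E} (ha : A.Atom a) (ht : A.IsOrdMultiple a t) :
    A.Sharp t := by
  obtain ⟨n, hn, hmax⟩ := ht
  refine meetZero_iff.mpr fun z hzt hzt' => ?_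
  by_contra hz0
  obtain ⟨b, hb, hbz⟩ := hAtomic z hz0
  obtain rfl := hMV.eq_of_atom_le_replicate ha hb hn (le_trans hbz hzt)
  have hdt : A.D b t := A.D_comm _ _ (D_iff_le_compl.mpr (le_trans hbz hzt'))
  exact hmax ⟨_, SumDef.cons hn hdt⟩

include hta

lemma inf_eq_of_hasOrthoSum {f : A.Atoms → E} (hf : ∀ a, A.le (f a) (ta a)) {v : E}
    (hv : A.HasOrthoSum f v) (b : A.Atoms) : hMV.inf v (ta b) = f b := by
  have hfv : A.le (f b) v := hv.2.2.1 _ (single_mem_finiteSums f b)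
  have hD : A.D (f b) (hMV.inf v (A.compl (ta b))) :=
    D_of_le_of_le (hf b) hMV.inf_le_right (A.D_compl _)
  -- each `f a` with `a ≠ b` lies below `tₐ ≤ t_b'`, so `v ≤ f b ⊕ (v ∧ t_b')`
  have hvle : A.le v (A.oplus (f b) (hMV.inf v (A.compl (ta b)))) := by
    refine hv.2.2.2 _ trivial fun s hs => hMV.le_oplus_inf_of_mem_finiteSums
      (hMV.pairwise_meetZero_of_le_ord hta hf) (fun a hab => ?_) hs (hv.2.2.1 s hs) hD
    have hab : A.MeetZero (ta b) (ta a) :=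
      hMV.pairwise_meetZero_of_le_ord hta (fun a => A.le_refl (ta a)) (Ne.symm hab)
    exact le_trans (hf a) (D_iff_le_compl.mp (hMV.D_of_meetZero hab))
  have hsharp : A.MeetZero (ta b) (A.compl (ta b)) :=
    hMV.sharp_of_isOrdMultiple hAtomic b.2 (hta b)
  rw [A.oplus_comm _ _ hD] at hvle
  refine le_antisymm ?_ (hMV.le_inf hfv (hf b))
  exact hMV.le_of_le_oplus_of_meetZero (A.D_comm _ _ hD) (le_trans hMV.inf_le_left hvle)
    (hsharp.mono hMV.inf_le_right hMV.inf_le_right)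

lemma inf_oplus {x y : E} (hxy : A.D x y) (a : A.Atoms) :
    hMV.inf (A.oplus x y) (ta a) = A.oplus (hMV.inf x (ta a)) (hMV.inf y (ta a)) := by
  obtain ⟨n, hn, -⟩ := hta a
  obtain ⟨k, hk, -⟩ := hMV.exists_sumDef_replicate_of_le hAtomic a.2 hn hMV.inf_le_right
  obtain ⟨m, hm, -⟩ := hMV.exists_sumDef_replicate_of_le hAtomic a.2 hn hMV.inf_le_right
  obtain ⟨hD, hle⟩ := oplus_le_oplus hMV.inf_le_left hMV.inf_le_left hxy
  have hkm : A.SumDef (List.replicate (k + m) a.1)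
      (A.oplus (hMV.inf x (ta a)) (hMV.inf y (ta a))) := by
    rw [List.replicate_add]; exact hk.append hm hD
  refine le_antisymm ?_ (hMV.le_inf hle ((hta a).le_of_sumDef_replicate hkm))
  obtain ⟨p, q, hpq, hpqe, hpx, hqy⟩ := hMV.exists_oplus_eq_of_le_oplus hxy (hMV.inf_le_left (y := ta a))
  have hpqa : A.le (A.oplus p q) (ta a) := hpqe ▸ hMV.inf_le_right
  rw [← hpqe]
  exact (oplus_le_oplus (hMV.le_inf hpx (le_trans (le_self_oplus hpq) hpqa))
    (hMV.le_inf hqy (le_trans (le_oplus_self hpq) hpqa)) hD).2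

lemma exists_max_inf {S : Set E} (hS : S.Nonempty) (a : A.Atoms) :
    ∃ x ∈ S, ∀ y ∈ S, A.le (hMV.inf y (ta a)) (hMV.inf x (ta a)) := by
  classical
  obtain ⟨n, hn, -⟩ := hta a
  have hmul : ∀ y, ∃ k, A.SumDef (List.replicate k a.1) (hMV.inf y (ta a)) ∧ k ≤ n :=
    fun y => hMV.exists_sumDef_replicate_of_le hAtomic a.2 hn hMV.inf_le_right
  let P k := ∃ x ∈ S, A.SumDef (List.replicate k a.1) (hMV.inf x (ta a))
  obtain ⟨x₀, hx₀⟩ := hS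
  obtain ⟨k₀, hk₀, hk₀n⟩ := hmul x₀
  obtain ⟨x, hx, hxK⟩ : P (Nat.findGreatest P n) := Nat.findGreatest_spec hk₀n ⟨x₀, hx₀, hk₀⟩
  refine ⟨x, hx, fun y hy => ?_⟩
  obtain ⟨k, hk, hkn⟩ := hmul y
  exact sumDef_replicate_le (Nat.le_findGreatest hkn ⟨y, hy, hk⟩) hk hxK

include hSO

lemma exists_hasOrthoSum_of_le_ord {f : A.Atoms → E} (hf : ∀ a, A.le (f a) (ta a)) :
    ∃ v, A.HasOrthoSum f v :=
  hSO _ f ta (fun a => hMV.sharp_of_isOrdMultiple hAtomic a.2 (hta a))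
    (hMV.orthogonal_of_pairwise (hMV.pairwise_meetZero_of_le_ord hta fun _ => A.le_refl _)) hf

lemma exists_inf_eq {f : A.Atoms → E} (hf : ∀ a, A.le (f a) (ta a)) :
    ∃ v, ∀ a, hMV.inf v (ta a) = f a := by
  obtain ⟨v, hv⟩ := hMV.exists_hasOrthoSum_of_le_ord hAtomic hSO hta hf
  exact ⟨v, hMV.inf_eq_of_hasOrthoSum hAtomic hta hf hv⟩

lemma hasOrthoSum_inf (x : E) : A.HasOrthoSum (fun a => hMV.inf x (ta a)) x := by
  have hc : ∀ a, A.le (hMV.inf x (ta a)) (ta a) := fun a => hMV.inf_le_right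
  obtain ⟨v, hv⟩ := hMV.exists_hasOrthoSum_of_le_ord hAtomic hSO hta hc
  obtain ⟨r, hdr, hx⟩ := hv.2.2.2 x trivial (hMV.isUB_finiteSums
    (hMV.pairwise_meetZero_of_le_ord hta hc) fun a => hMV.inf_le_left)
  suffices hr : r = A.zero by rwa [show v = x by rw [← hx, hr, A.oplus_zero]] at hv
  by_contra hr
  obtain ⟨b, hb, hbr⟩ := hAtomic r hr
  -- for the atom `b ≤ r`, `(x ∧ t_b) ⊕ b` is a multiple of `b` below `v ⊕ r = x`
  let a : A.Atoms := ⟨b, hb⟩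
  have hcv : A.le (hMV.inf x (ta a)) v := hv.2.2.1 _ (single_mem_finiteSums _ a)
  have hD : A.D (hMV.inf x (ta a)) b := D_of_le_of_le hcv hbr hdr
  obtain ⟨n, hn, -⟩ := hta a
  obtain ⟨k, hk, -⟩ := hMV.exists_sumDef_replicate_of_le hAtomic hb hn (hc a)
  have hmul : A.SumDef (List.replicate (k + 1) b) (A.oplus (hMV.inf x (ta a)) b) := by
    rw [A.oplus_comm _ _ hD]; exact SumDef.cons hk (A.D_comm _ _ hD)
  have hle : A.le (A.oplus (hMV.inf x (ta a)) b) (hMV.inf x (ta a)) :=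
    hMV.le_inf (hx ▸ (oplus_le_oplus hcv hbr hdr).2) ((hta a).le_of_sumDef_replicate hmul)
  exact hb.1 (eq_zero_of_oplus_le_self hD hle)

lemma le_of_forall_inf_le {x y : E} (h : ∀ a, A.le (hMV.inf x (ta a)) y) : A.le x y :=
  (hMV.hasOrthoSum_inf hAtomic hSO hta x).2.2.2 y trivial
    (hMV.isUB_finiteSums (hMV.pairwise_meetZero_of_le_ord hta fun _ => hMV.inf_le_right) h)

lemma D_iff_forall_inf {x y : E} :
    A.D x y ↔ ∀ a, A.D (hMV.inf x (ta a)) (hMV.inf y (ta a)) ∧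
      A.le (A.oplus (hMV.inf x (ta a)) (hMV.inf y (ta a))) (ta a) := by
  refine ⟨fun h a => ⟨D_of_le_of_le hMV.inf_le_left hMV.inf_le_left h,
    hMV.inf_oplus hAtomic hta h a ▸ hMV.inf_le_right⟩, fun h => ?_⟩
  -- `y ∧ tₐ` and `y' ∧ tₐ` add up to `1 ∧ tₐ = tₐ`; cancelling shows `x ∧ tₐ ≤ y'`
  refine A.D_comm _ _ (D_iff_le_compl.mpr (hMV.le_of_forall_inf_le hAtomic hSO hta fun a => ?_))
  obtain ⟨hD, hle⟩ := h a
  have hsplit : A.oplus (hMV.inf y (ta a)) (hMV.inf (A.compl y) (ta a)) = ta a := by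
    rw [← hMV.inf_oplus hAtomic hta (A.D_compl y) a, A.oplus_compl]
    exact le_antisymm hMV.inf_le_right (hMV.le_inf (A.le_one _) (A.le_refl _))
  have hle' : A.le (A.oplus (hMV.inf y (ta a)) (hMV.inf x (ta a)))
      (A.oplus (hMV.inf y (ta a)) (hMV.inf (A.compl y) (ta a))) := by
    rw [hsplit, ← A.oplus_comm _ _ hD]; exact hle
  exact le_trans (le_of_oplus_le_oplus_left (A.D_comm _ _ hD)
    (D_of_le_of_le hMV.inf_le_left hMV.inf_le_left (A.D_compl y)) hle') hMV.inf_le_left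

lemma exists_isSupIn (S : Set E) : ∃ s, A.IsSupIn Set.univ S s := by
  rcases S.eq_empty_or_nonempty with rfl | hS
  · exact ⟨A.zero, trivial, fun _ h => h.elim, fun z _ _ => A.zero_le z⟩
  choose xm hxm hmax using hMV.exists_max_inf hAtomic hta hS
  obtain ⟨v, hv⟩ := hMV.exists_inf_eq hAtomic hSO hta (f := fun a => hMV.inf (xm a) (ta a))
    fun a => hMV.inf_le_right
  refine ⟨v, trivial, fun x hx => hMV.le_of_forall_inf_le hAtomic hSO hta fun a => ?_,
    fun z _ hz => hMV.le_of_forall_inf_le hAtomic hSO hta fun a => ?_⟩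
  · exact le_trans (hmax a x hx) (hv a ▸ hMV.inf_le_left)
  · rw [hv a]; exact le_trans hMV.inf_le_left (hz _ (hxm a))

lemma toPi_bijective : Function.Bijective (hMV.toPi ta) := by
  refine ⟨fun x y hxy => ?_, fun f => ?_⟩
  · have h : ∀ a, hMV.inf x (ta a) = hMV.inf y (ta a) :=
      fun a => congrArg Subtype.val (congrFun hxy a)
    exact le_antisymm (hMV.le_of_forall_inf_le hAtomic hSO hta fun a => h a ▸ hMV.inf_le_left)
      (hMV.le_of_forall_inf_le hAtomic hSO hta fun a => h a ▸ hMV.inf_le_left)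
  · obtain ⟨v, hv⟩ := hMV.exists_inf_eq hAtomic hSO hta (f := fun a => (f a).1) fun a => (f a).2
    exact ⟨v, funext fun a => Subtype.ext (hv a)⟩

end

end MV

end EffectAlgebra

/-- A sharply orthocomplete Archimedean atomic MV-effect algebra is a complete
lattice; indeed `x ↦ (x ∧ nₐa)ₐ` is an isomorphism of `E` onto the direct product
effect algebra `∏_{a ∈ A} [0, nₐa]` over the set of atoms, `nₐ = ord a`. -/
theorem stmt15 {E : Type u} (A : EffectAlgebra E) (hMV : A.MV)
    (hArch : A.IsArchimedean) (hAtomic : A.Atomic)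
    (hSO : A.SharplyOrthocomplete) :
    A.Complete ∧
    ∀ ta : {a : E // A.Atom a} → E,
      (∀ a, ∃ n : ℕ, A.SumDef (List.replicate n a.1) (ta a) ∧
          ¬ A.nTimesDef (n + 1) a.1) →
      ∃ φ : E → ∀ a : {a : E // A.Atom a}, {y : E // A.le y (ta a)},
        Function.Bijective φ ∧
        (∀ x a, A.IsInfIn Set.univ {x, ta a} (φ x a).1) ∧
        (∀ x y : E, A.D x y ↔
          ∀ a, A.D (φ x a).1 (φ y a).1 ∧
            A.le (A.oplus (φ x a).1 (φ y a).1) (ta a)) ∧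
        (∀ x y : E, A.D x y →
          ∀ a, (φ (A.oplus x y) a).1 = A.oplus (φ x a).1 (φ y a).1) := by
  choose t ht using fun a : A.Atoms => EffectAlgebra.exists_isOrdMultiple hArch a.2.1
  refine ⟨EffectAlgebra.complete_of_forall_exists_isSupIn (hMV.exists_isSupIn hAtomic hSO ht),
    fun ta hta => ⟨hMV.toPi ta, hMV.toPi_bijective hAtomic hSO hta,
      fun x a => hMV.isInfIn_inf x (ta a), fun _ _ => hMV.D_iff_forall_inf hAtomic hSO hta,
      fun _ _ hxy a => hMV.inf_oplus hAtomic hta hxy a⟩⟩
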